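/- For every integer m ≥ 10 and every real y ≥ (14/9)·m·log(m) one has y^m·e^{−y} < 1. Moreover, for every integer m ≥ 26 and every real y ≥ (153/103)·m·log(m) one has y^m·e^{−y} < 1. -/
import Mathlib


open Real

private lemma aux_key (c : ℝ) (hc : 1 < c) (m : ℕ) (hm : 1 ≤ m) (t1 : ℝ)
    (ht1pos : 0 < t1) (hB : 1 / t1 ≤ c - 1)
    (hA : Real.log (c * t1) < (c - 1) * t1)
    (ht : t1 ≤ Real.log m) :
    ∀ y : ℝ, c * m * Real.log m ≤ y → y ^ m * Real.exp (-y) < 1 := by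
  intro y hy
  set t := Real.log m with htdef
  have htpos : 0 < t := lt_of_lt_of_le ht1pos ht
  have hmpos : (0 : ℝ) < m := by exact_mod_cast Nat.pos_of_ne_zero (by omega)
  have hcpos : (0 : ℝ) < c := by linarith
  -- step: log c + log t < (c-1) * t
  have hstep : Real.log c + Real.log t < (c - 1) * t := by
    have hdiv : Real.log t - Real.log t1 ≤ t / t1 - 1 := by
      have h := Real.log_le_sub_one_of_pos (div_pos htpos ht1pos)
      rwa [Real.log_div (ne_of_gt htpos) (ne_of_gt ht1pos)] at h
    have h2 : (t - t1) / t1 ≤ (c - 1) * (t - t1) := by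
      have : (t - t1) * (1 / t1) ≤ (t - t1) * (c - 1) :=
        mul_le_mul_of_nonneg_left hB (by linarith)
      calc (t - t1) / t1 = (t - t1) * (1 / t1) := by ring
        _ ≤ (t - t1) * (c - 1) := this
        _ = (c - 1) * (t - t1) := by ring
    have hct1 : Real.log (c * t1) = Real.log c + Real.log t1 :=
      Real.log_mul (ne_of_gt hcpos) (ne_of_gt ht1pos)
    have : Real.log c + Real.log t ≤ Real.log (c * t1) + (t - t1) / t1 := by
      rw [hct1]
      have : (t - t1) / t1 = t / t1 - 1 := by field_simp
      linarith [hdiv]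
    calc Real.log c + Real.log t ≤ Real.log (c * t1) + (t - t1) / t1 := this
      _ < (c - 1) * t1 + (c - 1) * (t - t1) := by linarith
      _ = (c - 1) * t := by ring
  set y0 := c * m * t with hy0def
  have hy0pos : 0 < y0 := by positivity
  have hct1 : 1 ≤ c * t1 := by
    have h1 : 1 ≤ (c - 1) * t1 := by
      rw [div_le_iff₀ ht1pos] at hB; linarith
    nlinarith
  have hct : 1 ≤ c * t := by
    nlinarith
  have hm_le_y0 : (m : ℝ) ≤ y0 := by
    have : (m : ℝ) * 1 ≤ (m : ℝ) * (c * t) := mul_le_mul_of_nonneg_left hct (le_of_lt hmpos)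
    calc (m : ℝ) = m * 1 := by ring
      _ ≤ m * (c * t) := this
      _ = y0 := by ring
  have hlogy0 : Real.log y0 = Real.log c + t + Real.log t := by
    have h1 : Real.log y0 = Real.log (c * m) + Real.log t := by
      rw [hy0def]; exact Real.log_mul (by positivity) (ne_of_gt htpos)
    have h2 : Real.log (c * (m : ℝ)) = Real.log c + Real.log (m : ℝ) :=
      Real.log_mul (ne_of_gt hcpos) (ne_of_gt hmpos)
    have h3 : t = Real.log (m : ℝ) := htdef
    linarith [h1, h2, h3]
  have hkey0 : (m : ℝ) * Real.log y0 < y0 := by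
    have : Real.log y0 < c * t := by rw [hlogy0]; nlinarith [hstep]
    calc (m : ℝ) * Real.log y0 < m * (c * t) :=
          mul_lt_mul_of_pos_left this hmpos
      _ = y0 := by ring
  have hypos : 0 < y := lt_of_lt_of_le hy0pos hy
  have hkey : (m : ℝ) * Real.log y < y := by
    have hdiv : Real.log y - Real.log y0 ≤ y / y0 - 1 := by
      have h := Real.log_le_sub_one_of_pos (div_pos hypos hy0pos)
      rwa [Real.log_div (ne_of_gt hypos) (ne_of_gt hy0pos)] at h
    have h2 : (m : ℝ) * (Real.log y - Real.log y0) ≤ y - y0 := by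
      have h3 : (m : ℝ) * (Real.log y - Real.log y0) ≤ m * (y / y0 - 1) :=
        mul_le_mul_of_nonneg_left hdiv (le_of_lt hmpos)
      have h4 : (m : ℝ) * (y / y0 - 1) = (m / y0) * (y - y0) := by field_simp
      have h5 : (m : ℝ) / y0 ≤ 1 := (div_le_one hy0pos).mpr hm_le_y0
      have h6 : ((m : ℝ) / y0) * (y - y0) ≤ 1 * (y - y0) :=
        mul_le_mul_of_nonneg_right h5 (by linarith)
      linarith [h3, h4 ▸ h3]
    nlinarith [hkey0]
  have hpow : y ^ m = Real.exp ((m : ℝ) * Real.log y) := by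
    rw [Real.exp_nat_mul, Real.exp_log hypos]
  rw [hpow, ← Real.exp_add]
  have : (m : ℝ) * Real.log y + (-y) < 0 := by linarith
  calc Real.exp ((m : ℝ) * Real.log y + (-y)) < Real.exp 0 := Real.exp_lt_exp.mpr this
    _ = 1 := Real.exp_zero

private lemma log_ten_lb : (2 : ℝ) ≤ Real.log 10 := by
  rw [Real.le_log_iff_exp_le (by norm_num)]
  have h : Real.exp 2 = (Real.exp 1) ^ 2 := by
    rw [← Real.exp_nat_mul]; norm_num
  have he := Real.exp_one_lt_d9
  nlinarith [Real.exp_pos 1]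

private lemma log_ten_ub : Real.log 10 ≤ 30 / 13 := by
  rw [Real.log_le_iff_le_exp (by norm_num)]
  have h : Real.exp (30 / 13) ^ (13 : ℕ) = Real.exp 30 := by
    rw [← Real.exp_nat_mul]; norm_num
  have h30 : (10 : ℝ) ^ (13 : ℕ) ≤ Real.exp (30 / 13) ^ (13 : ℕ) := by
    rw [h]
    have : Real.exp 30 = (Real.exp 1) ^ (30 : ℕ) := by
      rw [← Real.exp_nat_mul]; norm_num
    rw [this]
    have he := Real.exp_one_gt_d9
    calc (10 : ℝ) ^ (13 : ℕ) ≤ 2.7182818283 ^ (30 : ℕ) := by norm_num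
      _ ≤ (Real.exp 1) ^ (30 : ℕ) := pow_le_pow_left₀ (by norm_num) (le_of_lt he) 30
  exact le_of_pow_le_pow_left₀ (by norm_num) (le_of_lt (Real.exp_pos _)) h30

private lemma log_26_lb : (3 : ℝ) ≤ Real.log 26 := by
  rw [Real.le_log_iff_exp_le (by norm_num)]
  have h : Real.exp 3 = (Real.exp 1) ^ (3 : ℕ) := by
    rw [← Real.exp_nat_mul]; norm_num
  have he := Real.exp_one_lt_d9
  rw [h]
  calc (Real.exp 1) ^ (3 : ℕ) ≤ 2.7182818286 ^ (3 : ℕ) :=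
        pow_le_pow_left₀ (le_of_lt (Real.exp_pos 1)) (le_of_lt he) 3
    _ ≤ 26 := by norm_num

private lemma log_26_ub : Real.log 26 ≤ 49 / 15 := by
  rw [Real.log_le_iff_le_exp (by norm_num)]
  have h : Real.exp (49 / 15) ^ (15 : ℕ) = Real.exp 49 := by
    rw [← Real.exp_nat_mul]; norm_num
  have h49 : (26 : ℝ) ^ (15 : ℕ) ≤ Real.exp (49 / 15) ^ (15 : ℕ) := by
    rw [h]
    have : Real.exp 49 = (Real.exp 1) ^ (49 : ℕ) := by
      rw [← Real.exp_nat_mul]; norm_num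
    rw [this]
    have he := Real.exp_one_gt_d9
    calc (26 : ℝ) ^ (15 : ℕ) ≤ 2.7182818283 ^ (49 : ℕ) := by norm_num
      _ ≤ (Real.exp 1) ^ (49 : ℕ) := pow_le_pow_left₀ (by norm_num) (le_of_lt he) 49
  exact le_of_pow_le_pow_left₀ (by norm_num) (le_of_lt (Real.exp_pos _)) h49

private lemma hA1 : Real.log ((14 / 9 : ℝ) * Real.log 10) <
    ((14 / 9 : ℝ) - 1) * Real.log 10 := by
  have hL2 := log_ten_lb
  have hLu := log_ten_ub
  have hLpos : (0 : ℝ) < Real.log 10 := by linarith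
  rw [Real.log_lt_iff_lt_exp (by positivity)]
  set E := Real.exp ((14 / 9 - 1) * Real.log 10) with hE
  have hE9 : E ^ (9 : ℕ) = 10 ^ (5 : ℕ) := by
    rw [hE, ← Real.exp_nat_mul]
    have : (9 : ℕ) * ((14 / 9 - 1) * Real.log 10) = Real.log (10 ^ (5 : ℕ)) := by
      rw [Real.log_pow]; push_cast; ring
    rw [this, Real.exp_log (by norm_num)]
  have hx9 : ((14 / 9 : ℝ) * Real.log 10) ^ (9 : ℕ) < E ^ (9 : ℕ) := by
    rw [hE9]
    calc ((14 / 9 : ℝ) * Real.log 10) ^ (9 : ℕ) ≤ ((14 / 9 : ℝ) * (30 / 13)) ^ (9 : ℕ) := by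
          apply pow_le_pow_left₀ (by positivity)
          nlinarith
      _ < 10 ^ (5 : ℕ) := by norm_num
  have hEpos : 0 < E := Real.exp_pos _
  by_contra hcon
  push_neg at hcon
  have : E ^ (9 : ℕ) ≤ ((14 / 9 : ℝ) * Real.log 10) ^ (9 : ℕ) :=
    pow_le_pow_left₀ (le_of_lt hEpos) hcon 9
  linarith

private lemma hA2 : Real.log ((153 / 103 : ℝ) * Real.log 26) <
    ((153 / 103 : ℝ) - 1) * Real.log 26 := by
  have hL3 := log_26_lb
  have hLu := log_26_ub
  have hLpos : (0 : ℝ) < Real.log 26 := by linarith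
  rw [Real.log_lt_iff_lt_exp (by positivity)]
  set E := Real.exp ((153 / 103 - 1) * Real.log 26) with hE
  have hE103 : E ^ (103 : ℕ) = 26 ^ (50 : ℕ) := by
    rw [hE, ← Real.exp_nat_mul]
    have : (103 : ℕ) * ((153 / 103 - 1) * Real.log 26) = Real.log (26 ^ (50 : ℕ)) := by
      rw [Real.log_pow]; push_cast; ring
    rw [this, Real.exp_log (by norm_num)]
  have hx103 : ((153 / 103 : ℝ) * Real.log 26) ^ (103 : ℕ) < E ^ (103 : ℕ) := by
    rw [hE103]
    calc ((153 / 103 : ℝ) * Real.log 26) ^ (103 : ℕ)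
        ≤ ((153 / 103 : ℝ) * (49 / 15)) ^ (103 : ℕ) := by
          apply pow_le_pow_left₀ (by positivity)
          nlinarith
      _ < 26 ^ (50 : ℕ) := by norm_num
  have hEpos : 0 < E := Real.exp_pos _
  by_contra hcon
  push_neg at hcon
  have : E ^ (103 : ℕ) ≤ ((153 / 103 : ℝ) * Real.log 26) ^ (103 : ℕ) :=
    pow_le_pow_left₀ (le_of_lt hEpos) hcon 103
  linarith

theorem stmt19 :
    (∀ m : ℕ, 10 ≤ m → ∀ y : ℝ, (14/9 : ℝ) * m * Real.log m ≤ y →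
      y ^ m * Real.exp (-y) < 1) ∧
    (∀ m : ℕ, 26 ≤ m → ∀ y : ℝ, (153/103 : ℝ) * m * Real.log m ≤ y →
      y ^ m * Real.exp (-y) < 1) := by
  constructor
  · intro m hm y hy
    have hmr : (10 : ℝ) ≤ m := by exact_mod_cast hm
    have hlog : Real.log 10 ≤ Real.log m := Real.log_le_log (by norm_num) hmr
    have hL2 := log_ten_lb
    exact aux_key (14 / 9) (by norm_num) m (by omega) (Real.log 10)
      (by linarith) (by rw [div_le_iff₀ (by linarith)]; nlinarith) hA1 hlog y hy
  · intro m hm y hy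
    have hmr : (26 : ℝ) ≤ m := by exact_mod_cast hm
    have hlog : Real.log 26 ≤ Real.log m := Real.log_le_log (by norm_num) hmr
    have hL3 := log_26_lb
    exact aux_key (153 / 103) (by norm_num) m (by omega) (Real.log 26)
      (by linarith) (by rw [div_le_iff₀ (by linarith)]; nlinarith) hA2 hlog y hy
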